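/- Let R be an alternative ring with idempotent e1 and Peirce decomposition, i ≠ j. For a ∈ Rij and b ∈ Rji, the double commutator satisfies [[a,b],a] = 2·(a·b)·a. -/

import Mathlib

/-- The Peirce component `e R f = {x | e x = x ∧ x f = x}`. -/
def peirceSet {R : Type*} [NonAssocRing R] (e f : R) : Set R :=
  {x | e * x = x ∧ x * f = x}

section Alternative

variable {R : Type*} [NonAssocRing R]

/-- Linearize left alternativity at `x + y`; the alternative laws cancel all other terms. -/
theorem flexible_of_alternative
    (alt_left : ∀ x y : R, (x * x) * y = x * (x * y))
    (alt_right : ∀ x y : R, (y * x) * x = y * (x * x)) (x y : R) :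
    x * y * x = x * (y * x) := by
  have h := alt_left (x + y) x
  simp only [add_mul, mul_add] at h
  rw [alt_left x x, alt_right, alt_left y x] at h
  exact add_right_cancel (add_left_cancel h)

theorem mul_left_eq_zero_of_mem_peirceSet {e f a : R} (hef : e + f = 1)
    (ha : a ∈ peirceSet e f) : f * a = 0 := by
  rw [eq_sub_of_add_eq' hef, one_sub_mul, ha.1, sub_self]

theorem mul_self_eq_zero_of_mem_peirceSet
    (alt_left : ∀ x y : R, (x * x) * y = x * (x * y))
    (alt_right : ∀ x y : R, (y * x) * x = y * (x * x))
    {e f a : R} (hef : e + f = 1) (ha : a ∈ peirceSet e f) : a * a = 0 :=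
  calc a * a = a * f * a := by rw [ha.2]
    _ = a * (f * a) := flexible_of_alternative alt_left alt_right a f
    _ = 0 := by rw [mul_left_eq_zero_of_mem_peirceSet hef ha, mul_zero]

theorem commutator_commutator_of_mul_self_eq_zero
    (alt_left : ∀ x y : R, (x * x) * y = x * (x * y))
    (alt_right : ∀ x y : R, (y * x) * x = y * (x * x))
    {a : R} (ha : a * a = 0) (b : R) :
    (a * b - b * a) * a - a * (a * b - b * a) = (2 : ℕ) • (a * b * a) := by
  have hbaa : b * a * a = 0 := by rw [alt_right, ha, mul_zero]
  have haab : a * (a * b) = 0 := by rw [← alt_left, ha, zero_mul]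
  rw [sub_mul, mul_sub, hbaa, haab, ← flexible_of_alternative alt_left alt_right,
    sub_zero, zero_sub, sub_neg_eq_add, two_smul]

end Alternative

theorem double_commutator_general (R : Type*) [NonAssocRing R]
    (alt_left : ∀ x y : R, (x * x) * y = x * (x * y))
    (alt_right : ∀ x y : R, (y * x) * x = y * (x * x))
    (e1 : R)
    (e : Fin 2 → R) (h1 : e 0 = e1) (h2 : e 1 = 1 - e1) :
    ∀ (i j : Fin 2), i ≠ j → ∀ a ∈ peirceSet (e i) (e j), ∀ b ∈ peirceSet (e j) (e i),
      ((a * b - b * a) * a - a * (a * b - b * a)) = (2 : ℕ) • ((a * b) * a) := by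
  intro i j hij a ha b _
  have hsum : e i + e j = 1 := by
    fin_cases i <;> fin_cases j <;> simp_all
  exact commutator_commutator_of_mul_self_eq_zero alt_left alt_right
    (mul_self_eq_zero_of_mem_peirceSet alt_left alt_right hsum ha) b

/-- For `a ∈ Rᵢⱼ`, `b ∈ Rⱼᵢ` (`i ≠ j`) in an alternative ring,
`[[a,b],a] = 2 (ab) a`. -/
theorem double_commutator (R : Type*) [NonAssocRing R]
    (alt_left : ∀ x y : R, (x * x) * y = x * (x * y))
    (alt_right : ∀ x y : R, (y * x) * x = y * (x * x))
    (e1 : R) (he : e1 * e1 = e1)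
    (e : Fin 2 → R) (h1 : e 0 = e1) (h2 : e 1 = 1 - e1) :
    ∀ (i j : Fin 2), i ≠ j → ∀ a ∈ peirceSet (e i) (e j), ∀ b ∈ peirceSet (e j) (e i),
      ((a * b - b * a) * a - a * (a * b - b * a)) = (2 : ℕ) • ((a * b) * a) :=
  double_commutator_general R alt_left alt_right e1 e h1 h2
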